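/- For any Eulerian poset B of positive rank n, the g-polynomial satisfies Stanley's inversion formula: Σ_{x ∈ B} (-1)^{ρ(x)} g([0̂,x];t) g([x,1̂]*;t) = 0, and likewise Σ_{x ∈ B} (-1)^{ρ(x)} g([0̂,x]*;t) g([x,1̂];t) = 0. -/

import Mathlib

/- Statement 10 (Stanley inversion): for any Eulerian poset B of positive rank n,
  Σ_{x ∈ B} (-1)^{ρ(x)} g([0̂,x];t) g([x,1̂]*;t) = 0  and
  Σ_{x ∈ B} (-1)^{ρ(x)} g([0̂,x]*;t) g([x,1̂];t) = 0. -/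

open Classical Polynomial
noncomputable section

/-- A finite graded poset (with rank function ρ) is Eulerian if every nontrivial interval
has as many elements of odd rank as of even rank. -/
def IsEulerian {α : Type*} [Fintype α] [PartialOrder α] (ρ : α → ℕ) : Prop :=
  ∀ z x : α, z < x →
    (Finset.univ.filter fun y => z ≤ y ∧ y ≤ x ∧ Odd (ρ y)).card =
    (Finset.univ.filter fun y => z ≤ y ∧ y ≤ x ∧ Even (ρ y)).card

/-- A system of g-polynomials for all intervals of a finite graded poset: G z x is
Stanley's g-polynomial g([z,x];t).  It satisfies g = 1 on rank-0 intervals, has degree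
strictly less than half the rank of the interval, and obeys Stanley's defining recursion
t^n g([z,x];t⁻¹) = Σ_{z ≤ y ≤ x} (t-1)^{n-ρ(y)+ρ(z)} g([z,y];t). -/
def IsGSystem {α : Type*} [Fintype α] [PartialOrder α] (ρ : α → ℕ)
    (G : α → α → Polynomial ℤ) : Prop :=
  (∀ x, G x x = 1) ∧
  ∀ z x : α, z < x →
    2 * (G z x).natDegree < ρ x - ρ z ∧
    Polynomial.reflect (ρ x - ρ z) (G z x) =
      ∑ y ∈ Finset.univ.filter (fun y => z ≤ y ∧ y ≤ x),
        (Polynomial.X - 1) ^ (ρ x - ρ y) * G z y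

/-! Both identities say that the signed g-matrices `A(z,y) = (-1)^ρ(z) g([z,y];t)` and
`B(y,x) = (-1)^ρ(y) g([y,x]*;t)` are mutually inverse in the incidence algebra. For `A * B = 1`,
the entry `P = Σ_y (-1)^ρ(y) g([z,y];t) g([y,x]*;t)` of a nontrivial interval `[z,x]` of rank `n`
has degree `< n/2`; expanding `t^n P(1/t)` by the defining recursion of both factors and
summing the signs over each subinterval (the Eulerian property) gives back `P`, and a
polynomial of degree `< n/2` with `t^n P(1/t) = P` vanishes. Then `B * A = 1`, because a
one-sided inverse of a square matrix is two-sided. -/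

open OrderDual Finset

namespace Polynomial

variable {R : Type*}

lemma reflect_sum [Semiring R] {ι : Type*} (s : Finset ι) (f : ι → R[X]) (N : ℕ) :
    reflect N (∑ i ∈ s, f i) = ∑ i ∈ s, reflect N (f i) :=
  map_sum (⟨⟨reflect N, reflect_zero⟩, fun p q => reflect_add p q N⟩ : R[X] →+ R[X]) f s

lemma reflect_neg_one_pow_mul [Ring R] (k N : ℕ) (p : R[X]) :
    reflect N ((-1) ^ k * p) = (-1) ^ k * reflect N p := by
  have hC : (-1 : R[X]) ^ k = C ((-1) ^ k) := by simp
  rw [hC, reflect_C_mul]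

lemma eq_zero_of_reflect_eq_self [Semiring R] {p : R[X]} {N : ℕ} (hp : reflect N p = p)
    (hdeg : 2 * p.natDegree < N) : p = 0 := by
  ext k
  rw [coeff_zero]
  by_cases hk : k ≤ p.natDegree
  · rw [← hp, coeff_reflect, revAt_le (by omega)]
    exact coeff_eq_zero_of_natDegree_lt (by omega)
  · exact coeff_eq_zero_of_natDegree_lt (by omega)

end Polynomial

section ClosedInterval

variable {β : Type*} [Fintype β] [PartialOrder β]

def closedInterval (z x : β) : Finset β := univ.filter fun y => z ≤ y ∧ y ≤ x

@[simp]
lemma mem_closedInterval {z x y : β} : y ∈ closedInterval z x ↔ z ≤ y ∧ y ≤ x := by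
  simp [closedInterval]

@[simp]
lemma closedInterval_self (z : β) : closedInterval z z = {z} := by
  ext y
  simp [le_antisymm_iff, and_comm]

lemma closedInterval_eq_empty {z x : β} (h : ¬z ≤ x) : closedInterval z x = ∅ := by
  ext y
  simpa using fun hzy hyx => h (hzy.trans hyx)

lemma closedInterval_bot_top [BoundedOrder β] : closedInterval (⊥ : β) ⊤ = univ := by
  ext
  simp

lemma closedInterval_toDual (z x : β) :
    closedInterval (toDual x) (toDual z) = (closedInterval z x).map toDual.toEmbedding := by
  ext y
  simp [le_toDual, toDual_le, and_comm]

lemma sum_closedInterval_sum_closedInterval_sum_closedInterval_comm {M : Type*}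
    [AddCommMonoid M] (z x : β) (f : β → β → β → M) :
    ∑ y ∈ closedInterval z x, ∑ w ∈ closedInterval z y, ∑ v ∈ closedInterval y x, f w y v
      = ∑ w ∈ closedInterval z x, ∑ v ∈ closedInterval w x, ∑ y ∈ closedInterval w v,
          f w y v := by
  rw [sum_comm' (s' := fun w => closedInterval w x) (t' := closedInterval z x) fun y w => by
    simp only [mem_closedInterval]
    exact ⟨fun ⟨⟨_, hyx⟩, hzw, hwy⟩ => ⟨⟨hwy, hyx⟩, hzw, hwy.trans hyx⟩,
      fun ⟨⟨hwy, hyx⟩, hzw, _⟩ => ⟨⟨hzw.trans hwy, hyx⟩, hzw, hwy⟩⟩]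
  refine sum_congr rfl fun w _ => ?_
  exact sum_comm' (s' := fun v => closedInterval w v) (t' := closedInterval w x) fun y v => by
    simp only [mem_closedInterval]
    exact ⟨fun ⟨⟨hwy, _⟩, hyv, hvx⟩ => ⟨⟨hwy, hyv⟩, hwy.trans hyv, hvx⟩,
      fun ⟨⟨hwy, hyv⟩, _, hvx⟩ => ⟨⟨hwy, hyv.trans hvx⟩, hyv, hvx⟩⟩

end ClosedInterval

namespace IsEulerian

variable {β R : Type*} [Fintype β] [PartialOrder β] {ρ : β → ℕ}

lemma sum_neg_one_pow_eq_zero [Ring R] (hE : IsEulerian ρ) {w v : β} (h : w < v) :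
    ∑ y ∈ closedInterval w v, (-1 : R) ^ ρ y = 0 := by
  have heven : (closedInterval w v).filter (fun y => Even (ρ y)) =
      univ.filter fun y => w ≤ y ∧ y ≤ v ∧ Even (ρ y) := by
    ext
    simp [and_assoc]
  have hodd : (closedInterval w v).filter (fun y => ¬Even (ρ y)) =
      univ.filter fun y => w ≤ y ∧ y ≤ v ∧ Odd (ρ y) := by
    ext
    simp [and_assoc]
  rw [← sum_filter_add_sum_filter_not _ fun y => Even (ρ y),
    sum_congr rfl fun y hy => (mem_filter.1 hy).2.neg_one_pow,
    sum_congr rfl fun y hy => (Nat.not_even_iff_odd.1 (mem_filter.1 hy).2).neg_one_pow,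
    sum_const, sum_const, heven, hodd, hE w v h]
  simp

/-- Summing `(-1)^ρ(y)` over `y` between `w` and `v` kills every pair `w < v`. -/
lemma sum_neg_one_pow_mul_sum_sum [CommRing R] (hE : IsEulerian ρ) (f : β → β → R)
    (z x : β) :
    ∑ y ∈ closedInterval z x,
        (-1) ^ ρ y * ∑ w ∈ closedInterval z y, ∑ v ∈ closedInterval y x, f w v
      = ∑ w ∈ closedInterval z x, (-1) ^ ρ w * f w w := by
  simp_rw [mul_sum]
  rw [sum_closedInterval_sum_closedInterval_sum_closedInterval_comm]
  refine sum_congr rfl fun w hw => ?_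
  simp_rw [← sum_mul]
  rw [sum_eq_single_of_mem w (by simpa using (mem_closedInterval.1 hw).2)]
  · simp [mul_comm]
  · intro v hv hvw
    rw [hE.sum_neg_one_pow_eq_zero (lt_of_le_of_ne (mem_closedInterval.1 hv).1 (Ne.symm hvw)),
      zero_mul]

end IsEulerian

namespace IsGSystem

variable {β : Type*} [Fintype β] [PartialOrder β] {r : β → ℕ} {G : β → β → ℤ[X]}

lemma rank_lt (hG : IsGSystem r G) {z x : β} (h : z < x) : r z < r x := by
  have := (hG.2 z x h).1
  omega

lemma rank_mono (hG : IsGSystem r G) : Monotone r := fun _ _ h =>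
  h.eq_or_lt.elim (fun e => e ▸ le_rfl) fun h => (hG.rank_lt h).le

lemma two_mul_natDegree_le (hG : IsGSystem r G) {z x : β} (h : z ≤ x) :
    2 * (G z x).natDegree ≤ r x - r z := by
  rcases h.eq_or_lt with rfl | h
  · simp [hG.1]
  · exact (hG.2 z x h).1.le

lemma reflect_eq_sum (hG : IsGSystem r G) {z x : β} (h : z ≤ x) :
    reflect (r x - r z) (G z x) = ∑ y ∈ closedInterval z x, (X - 1) ^ (r x - r y) * G z y := by
  rcases h.eq_or_lt with rfl | h
  · simp [hG.1]
  · exact (hG.2 z x h).2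

-- For `w ≤ y` in `α`, `Gd (toDual y) (toDual w)` is `g([w,y]*;t)`.
variable {α : Type*} [Fintype α] [PartialOrder α] {ρ : α → ℕ} {N : ℕ}
  {Gd : αᵒᵈ → αᵒᵈ → ℤ[X]}

lemma dual_two_mul_natDegree_lt (hN : ∀ a, ρ a ≤ N)
    (hGd : IsGSystem (fun y : αᵒᵈ => N - ρ (ofDual y)) Gd) {w y : α} (h : w < y) :
    2 * (Gd (toDual y) (toDual w)).natDegree < ρ y - ρ w := by
  have := (hGd.2 (toDual y) (toDual w) h).1
  have := hN y
  simp only [ofDual_toDual] at *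
  omega

lemma dual_two_mul_natDegree_le (hN : ∀ a, ρ a ≤ N)
    (hGd : IsGSystem (fun y : αᵒᵈ => N - ρ (ofDual y)) Gd) {w y : α} (h : w ≤ y) :
    2 * (Gd (toDual y) (toDual w)).natDegree ≤ ρ y - ρ w := by
  rcases h.eq_or_lt with rfl | h
  · simp [hGd.1]
  · exact (dual_two_mul_natDegree_lt hN hGd h).le

lemma dual_reflect_eq_sum (hN : ∀ a, ρ a ≤ N)
    (hGd : IsGSystem (fun y : αᵒᵈ => N - ρ (ofDual y)) Gd) {w y : α} (h : w ≤ y) :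
    reflect (ρ y - ρ w) (Gd (toDual y) (toDual w))
      = ∑ u ∈ closedInterval w y, (X - 1) ^ (ρ u - ρ w) * Gd (toDual y) (toDual u) := by
  have hrec := hGd.reflect_eq_sum (x := toDual w) (z := toDual y) h
  have hsub : ∀ u, N - ρ w - (N - ρ u) = ρ u - ρ w := fun u => by
    have := hN u
    omega
  simp only [ofDual_toDual, hsub, closedInterval_toDual, sum_map] at hrec
  exact hrec

end IsGSystem

section IncidenceMatrix

variable {β R : Type*} [Fintype β] [PartialOrder β] [Semiring R]

def incidenceMatrix (f : β → β → R) : Matrix β β R :=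
  Matrix.of fun z x => if z ≤ x then f z x else 0

lemma incidenceMatrix_mul_apply (f g : β → β → R) (z x : β) :
    (incidenceMatrix f * incidenceMatrix g) z x = ∑ y ∈ closedInterval z x, f z y * g y x := by
  simp only [incidenceMatrix, Matrix.mul_apply, Matrix.of_apply, ite_mul, mul_ite, zero_mul,
    mul_zero, closedInterval, sum_filter]
  exact sum_congr rfl fun y _ => by by_cases z ≤ y <;> by_cases y ≤ x <;> simp [*]

end IncidenceMatrix

section GInversion

variable {α : Type*} [Fintype α] [PartialOrder α] {ρ : α → ℕ} {N : ℕ}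
  {G : α → α → ℤ[X]} {Gd : αᵒᵈ → αᵒᵈ → ℤ[X]}

lemma reflect_g_mul_dual_g (hG : IsGSystem ρ G) (hN : ∀ a, ρ a ≤ N)
    (hGd : IsGSystem (fun y : αᵒᵈ => N - ρ (ofDual y)) Gd) {z y x : α} (hzy : z ≤ y)
    (hyx : y ≤ x) :
    reflect (ρ x - ρ z) (G z y * Gd (toDual x) (toDual y))
      = ∑ w ∈ closedInterval z y, ∑ v ∈ closedInterval y x,
          (X - 1) ^ (ρ v - ρ w) * (G z w * Gd (toDual x) (toDual v)) := by
  have hmono := hG.rank_mono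
  have hsplit : ρ x - ρ z = (ρ y - ρ z) + (ρ x - ρ y) := by
    have := hmono hzy
    have := hmono hyx
    omega
  rw [hsplit, reflect_mul _ _ (by linarith [hG.two_mul_natDegree_le hzy])
      (by linarith [hGd.dual_two_mul_natDegree_le hN hyx]),
    hG.reflect_eq_sum hzy, hGd.dual_reflect_eq_sum hN hyx, sum_mul_sum]
  refine sum_congr rfl fun w hw => sum_congr rfl fun v hv => ?_
  rw [mem_closedInterval] at hw hv
  have hpow : ((X : ℤ[X]) - 1) ^ (ρ y - ρ w) * (X - 1) ^ (ρ v - ρ y) = (X - 1) ^ (ρ v - ρ w) := by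
    rw [← pow_add]
    congr 1
    have := hmono hw.2
    have := hmono hv.1
    omega
  rw [← hpow]
  ring

lemma two_mul_natDegree_g_mul_dual_g_lt (hG : IsGSystem ρ G) (hN : ∀ a, ρ a ≤ N)
    (hGd : IsGSystem (fun y : αᵒᵈ => N - ρ (ofDual y)) Gd) {z y x : α} (hzy : z ≤ y)
    (hyx : y ≤ x) (hzx : z < x) :
    2 * ((-1) ^ ρ y * G z y * Gd (toDual x) (toDual y)).natDegree < ρ x - ρ z := by
  have hdeg : ((-1) ^ ρ y * G z y * Gd (toDual x) (toDual y)).natDegree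
      ≤ (G z y).natDegree + (Gd (toDual x) (toDual y)).natDegree := by
    have hsign : ((-1 : ℤ[X]) ^ ρ y).natDegree = 0 := by simp
    have := natDegree_mul_le (p := (-1) ^ ρ y * G z y) (q := Gd (toDual x) (toDual y))
    have := natDegree_mul_le (p := (-1 : ℤ[X]) ^ ρ y) (q := G z y)
    omega
  have := hG.rank_mono hzy
  have := hG.rank_mono hyx
  rcases hzy.eq_or_lt with rfl | hzy
  · have := hGd.dual_two_mul_natDegree_lt hN hzx
    rw [hG.1] at hdeg ⊢
    rw [natDegree_one] at hdeg
    omega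
  · have := hG.2 z y hzy
    have := hGd.dual_two_mul_natDegree_le hN hyx
    omega

theorem IsEulerian.sum_neg_one_pow_mul_g_mul_dual_g_eq_zero (hE : IsEulerian ρ)
    (hG : IsGSystem ρ G) (hN : ∀ a, ρ a ≤ N)
    (hGd : IsGSystem (fun y : αᵒᵈ => N - ρ (ofDual y)) Gd) {z x : α} (hzx : z < x) :
    ∑ y ∈ closedInterval z x, (-1) ^ ρ y * G z y * Gd (toDual x) (toDual y) = 0 := by
  refine eq_zero_of_reflect_eq_self ?_ ?_ (N := ρ x - ρ z)
  · calc
      _ = ∑ y ∈ closedInterval z x, (-1) ^ ρ y * ∑ w ∈ closedInterval z y,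
            ∑ v ∈ closedInterval y x,
              (X - 1) ^ (ρ v - ρ w) * (G z w * Gd (toDual x) (toDual v)) := by
        rw [reflect_sum]
        refine sum_congr rfl fun y hy => ?_
        rw [mem_closedInterval] at hy
        rw [mul_assoc, reflect_neg_one_pow_mul, reflect_g_mul_dual_g hG hN hGd hy.1 hy.2]
      _ = _ := by
        rw [hE.sum_neg_one_pow_mul_sum_sum]
        simp [mul_assoc]
  · have hbound : ∀ y ∈ closedInterval z x,
        ((-1) ^ ρ y * G z y * Gd (toDual x) (toDual y)).natDegree ≤ (ρ x - ρ z - 1) / 2 :=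
      fun y hy => by
        have := two_mul_natDegree_g_mul_dual_g_lt hG hN hGd
          (mem_closedInterval.1 hy).1 (mem_closedInterval.1 hy).2 hzx
        omega
    have := natDegree_sum_le_of_forall_le _ _ hbound
    have := hG.rank_lt hzx
    omega


lemma IsEulerian.incidenceMatrix_g_mul_dual_g_eq_one (hE : IsEulerian ρ) (hG : IsGSystem ρ G) (hN : ∀ a, ρ a ≤ N)
    (hGd : IsGSystem (fun y : αᵒᵈ => N - ρ (ofDual y)) Gd) :
    incidenceMatrix (fun z y => (-1) ^ ρ z * G z y)
      * incidenceMatrix (fun y x => (-1) ^ ρ y * Gd (toDual x) (toDual y)) = 1 := by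
  refine Matrix.ext fun z x => ?_
  rw [incidenceMatrix_mul_apply, Matrix.one_apply]
  by_cases hzx : z ≤ x
  · rcases hzx.eq_or_lt with rfl | hzx
    · simp [hG.1, hGd.1, ← mul_pow]
    · calc
        _ = (-1) ^ ρ z *
            ∑ y ∈ closedInterval z x, (-1) ^ ρ y * G z y * Gd (toDual x) (toDual y) := by
          rw [mul_sum]
          exact sum_congr rfl fun y _ => by ring
        _ = _ := by
          rw [hE.sum_neg_one_pow_mul_g_mul_dual_g_eq_zero hG hN hGd hzx, mul_zero, if_neg hzx.ne]
  · rw [if_neg fun h => hzx h.le, closedInterval_eq_empty hzx, sum_empty]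

end GInversion

open OrderDual in
theorem statement10_general {α : Type*} [Fintype α] [PartialOrder α] [BoundedOrder α]
    (ρ : α → ℕ) (hbot : ρ ⊥ = 0)
    (hrank : 1 ≤ ρ ⊤) (hE : IsEulerian ρ)
    (G : α → α → Polynomial ℤ) (hG : IsGSystem ρ G)
    (Gd : αᵒᵈ → αᵒᵈ → Polynomial ℤ)
    (hGd : IsGSystem (fun y : αᵒᵈ => ρ ⊤ - ρ (ofDual y)) Gd) :
    (∑ x : α, (-1 : Polynomial ℤ) ^ ρ x * G ⊥ x * Gd (toDual ⊤) (toDual x) = 0) ∧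
    (∑ x : α, (-1 : Polynomial ℤ) ^ ρ x * Gd (toDual x) (toDual ⊥) * G x ⊤ = 0) := by
  have hN : ∀ a, ρ a ≤ ρ ⊤ := fun a => hG.rank_mono le_top
  have hbt : (⊥ : α) < ⊤ := bot_lt_iff_ne_bot.2 fun h => by
    rw [h, hbot] at hrank
    omega
  have hAB := hE.incidenceMatrix_g_mul_dual_g_eq_one hG hN hGd
  have hBA := Matrix.ext_iff.2 (mul_eq_one_comm.1 hAB) ⊥ ⊤
  rw [incidenceMatrix_mul_apply, Matrix.one_apply_ne hbt.ne, closedInterval_bot_top, hbot] at hBA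
  refine ⟨?_, ?_⟩
  · simpa [closedInterval_bot_top] using hE.sum_neg_one_pow_mul_g_mul_dual_g_eq_zero hG hN hGd hbt
  · rw [← hBA]
    exact sum_congr rfl fun y _ => by ring

open OrderDual in
theorem statement10 {α : Type*} [Fintype α] [PartialOrder α] [BoundedOrder α]
    (ρ : α → ℕ) (hbot : ρ ⊥ = 0) (hcov : ∀ a b : α, a ⋖ b → ρ b = ρ a + 1)
    (hrank : 1 ≤ ρ ⊤) (hE : IsEulerian ρ)
    (G : α → α → Polynomial ℤ) (hG : IsGSystem ρ G)
    (Gd : αᵒᵈ → αᵒᵈ → Polynomial ℤ)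
    (hGd : IsGSystem (fun y : αᵒᵈ => ρ ⊤ - ρ (ofDual y)) Gd) :
    (∑ x : α, (-1 : Polynomial ℤ) ^ ρ x * G ⊥ x * Gd (toDual ⊤) (toDual x) = 0) ∧
    (∑ x : α, (-1 : Polynomial ℤ) ^ ρ x * Gd (toDual x) (toDual ⊥) * G x ⊤ = 0) :=
  statement10_general ρ hbot hrank hE G hG Gd hGd
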